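/- For every λ ∈ ℂ, the cubic f_λ divides the polynomial F_λ(∂f_λ/∂X₀, ∂f_λ/∂X₁, ∂f_λ/∂X₂) in ℂ[X₀, X₁, X₂]. (Equivalently, the image of the Hesse cubic {f_λ = 0} under its gradient map is contained in the sextic {F_λ = 0}; F_λ is the equation of the dual curve of the Hesse cubic.) -/
import Mathlib


open MvPolynomial

/-- The Hesse cubic `f_λ = X₀³ + X₁³ + X₂³ − 3λ·X₀X₁X₂`. -/
noncomputable def hesse (l : ℂ) : MvPolynomial (Fin 3) ℂ :=
  X 0 ^ 3 + X 1 ^ 3 + X 2 ^ 3 - C (3 * l) * (X 0 * X 1 * X 2)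

/-- The sextic `F_λ`, equation of the dual curve of the Hesse cubic. -/
noncomputable def dualSextic (l : ℂ) : MvPolynomial (Fin 3) ℂ :=
  X 0 ^ 6 + X 1 ^ 6 + X 2 ^ 6
    + C (4 * l ^ 3 - 2) * (X 0 ^ 3 * X 1 ^ 3 + X 0 ^ 3 * X 2 ^ 3 + X 1 ^ 3 * X 2 ^ 3)
    - C (6 * l ^ 2) * (X 0 * X 1 * X 2 * (X 0 ^ 3 + X 1 ^ 3 + X 2 ^ 3))
    - C (3 * l * (l ^ 3 - 4)) * (X 0 ^ 2 * X 1 ^ 2 * X 2 ^ 2)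

set_option maxHeartbeats 2000000 in
/-- The quotient `F_λ(∇f_λ) / f_λ`. -/
noncomputable def quot13 (l : ℂ) : MvPolynomial (Fin 3) ℂ :=
  C ((729 : ℂ)) * (X 0 ^ 9)
  + C ((-2187) * l ^ 1 + (-4374) * l ^ 4) * (X 0 ^ 7 * X 1 ^ 1 * X 2 ^ 1)
  + C ((-729) + (5832) * l ^ 3 + (-2916) * l ^ 6) * (X 0 ^ 6 * X 1 ^ 3)
  + C ((-729) + (5832) * l ^ 3 + (-2916) * l ^ 6) * (X 0 ^ 6 * X 2 ^ 3)
  + C ((-8748) * l ^ 2 + (30618) * l ^ 5 + (-2187) * l ^ 8) * (X 0 ^ 5 * X 1 ^ 2 * X 2 ^ 2)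
  + C ((4374) * l ^ 1 + (-26244) * l ^ 4 + (8748) * l ^ 7) * (X 0 ^ 4 * X 1 ^ 4 * X 2 ^ 1)
  + C ((4374) * l ^ 1 + (-26244) * l ^ 4 + (8748) * l ^ 7) * (X 0 ^ 4 * X 1 ^ 1 * X 2 ^ 4)
  + C ((-729) + (5832) * l ^ 3 + (-2916) * l ^ 6) * (X 0 ^ 3 * X 1 ^ 6)
  + C ((1458) + (26244) * l ^ 3 + (-43740) * l ^ 6 + (729) * l ^ 9) * (X 0 ^ 3 * X 1 ^ 3 * X 2 ^ 3)
  + C ((-729) + (5832) * l ^ 3 + (-2916) * l ^ 6) * (X 0 ^ 3 * X 2 ^ 6)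
  + C ((-8748) * l ^ 2 + (30618) * l ^ 5 + (-2187) * l ^ 8) * (X 0 ^ 2 * X 1 ^ 5 * X 2 ^ 2)
  + C ((-8748) * l ^ 2 + (30618) * l ^ 5 + (-2187) * l ^ 8) * (X 0 ^ 2 * X 1 ^ 2 * X 2 ^ 5)
  + C ((-2187) * l ^ 1 + (-4374) * l ^ 4) * (X 0 ^ 1 * X 1 ^ 7 * X 2 ^ 1)
  + C ((4374) * l ^ 1 + (-26244) * l ^ 4 + (8748) * l ^ 7) * (X 0 ^ 1 * X 1 ^ 4 * X 2 ^ 4)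
  + C ((-2187) * l ^ 1 + (-4374) * l ^ 4) * (X 0 ^ 1 * X 1 ^ 1 * X 2 ^ 7)
  + C ((729 : ℂ)) * (X 1 ^ 9)
  + C ((-729) + (5832) * l ^ 3 + (-2916) * l ^ 6) * (X 1 ^ 6 * X 2 ^ 3)
  + C ((-729) + (5832) * l ^ 3 + (-2916) * l ^ 6) * (X 1 ^ 3 * X 2 ^ 6)
  + C ((729 : ℂ)) * (X 2 ^ 9)

lemma pd0 (l : ℂ) : pderiv 0 (hesse l) = 3 * X 0 ^ 2 - C (3 * l) * (X 1 * X 2) := by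
  simp only [hesse, map_sub, map_add, pderiv_mul, pderiv_X, pderiv_C, pderiv_pow]
  norm_num [Pi.single_apply, C_eq_smul_one, Fin.ext_iff]

lemma pd1 (l : ℂ) : pderiv 1 (hesse l) = 3 * X 1 ^ 2 - C (3 * l) * (X 0 * X 2) := by
  simp only [hesse, map_sub, map_add, pderiv_mul, pderiv_X, pderiv_C, pderiv_pow]
  norm_num [Pi.single_apply, C_eq_smul_one, Fin.ext_iff]

lemma pd2 (l : ℂ) : pderiv 2 (hesse l) = 3 * X 2 ^ 2 - C (3 * l) * (X 0 * X 1) := by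
  simp only [hesse, map_sub, map_add, pderiv_mul, pderiv_X, pderiv_C, pderiv_pow]
  norm_num [Pi.single_apply, C_eq_smul_one, Fin.ext_iff]

set_option maxHeartbeats 4000000 in
/-- for every `λ ∈ ℂ`, the Hesse cubic `f_λ` divides
`F_λ(∂f_λ/∂X₀, ∂f_λ/∂X₁, ∂f_λ/∂X₂)`: the image of the Hesse cubic under its
gradient map is contained in the sextic `{F_λ = 0}`. -/
theorem stmt_13 (l : ℂ) :
    hesse l ∣ aeval (fun i : Fin 3 => pderiv i (hesse l)) (dualSextic l) := by
  refine ⟨quot13 l, ?_⟩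
  simp only [dualSextic, map_add, map_sub, map_mul, map_pow, aeval_X, aeval_C, algebraMap_eq,
    pd0, pd1, pd2]
  simp only [hesse, quot13]
  simp only [map_add, map_sub, map_mul, map_pow, map_neg, map_one, map_ofNat]
  ring
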